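/- arXiv:math/0610068 — 2 statements merged into one kernel-verified Lean document; each statement's English description precedes it below -/
import Mathlib

section
/- Let N be a hyperbolic lattice (signature (1,n)) and H ∈ N with H·H > 0. If A, B ∈ N satisfy A·A ≥ 0, B·B ≥ 0, A·H > 0, B·H > 0 and A·B = 0, then A·A = B·B = 0 and there exist a primitive element F ∈ N with F·F = 0, F·H > 0 and positive integers a, b such that A = aF and B = bF. -/
/-!
If `A·A, B·B ≥ 0`, `A·H, B·H > 0` and `A·B = 0`, then `D = (B·H) A - (A·H) B` is orthogonal to
`H` with `D·D = (B·H)² A·A + (A·H)² B·B ≥ 0`, so `D = 0` because the form is negative definite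
on `H^⊥`. Hence `A` and `B` are proportional, and pairing with `A` (resp. `B`) gives
`A·A = B·B = 0`. Writing `A = a F` with `a` maximal makes `F` primitive, and the proportionality
`(A·H) B = (B·H) a F` forces `B` to be an integer multiple of `F` by a Bézout argument.
-/

section Orthogonal

variable {R M : Type*} [CommRing R] [LinearOrder R] [IsStrictOrderedRing R]
  [AddCommGroup M] [Module R M] {b : M →ₗ[R] M →ₗ[R] R} {H A B : M}

theorem smul_eq_smul_of_orthogonal (hneg : ∀ x : M, b x H = 0 → x ≠ 0 → b x x < 0)
    (hA : 0 ≤ b A A) (hB : 0 ≤ b B B) (hAB : b A B = 0) (hBA : b B A = 0) :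
    b B H • A = b A H • B := by
  set D := b B H • A - b A H • B
  have hDH : b D H = 0 := by
    simp only [D, map_sub, map_smul, LinearMap.sub_apply, LinearMap.smul_apply, smul_eq_mul]
    ring
  have hDD : b D D = b B H ^ 2 * b A A + b A H ^ 2 * b B B := by
    simp only [D, map_sub, map_smul, LinearMap.sub_apply, LinearMap.smul_apply, smul_eq_mul,
      hAB, hBA]
    ring
  by_contra hne
  have := hneg D hDH (sub_ne_zero.mpr hne)
  nlinarith [sq_nonneg (b B H), sq_nonneg (b A H)]

theorem apply_self_eq_zero_of_orthogonal (hneg : ∀ x : M, b x H = 0 → x ≠ 0 → b x x < 0)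
    (hA : 0 ≤ b A A) (hB : 0 ≤ b B B) (hBH : 0 < b B H) (hAB : b A B = 0) (hBA : b B A = 0) :
    b A A = 0 := by
  have h := congrArg (b · A) (smul_eq_smul_of_orthogonal hneg hA hB hAB hBA)
  simp only [map_smul, LinearMap.smul_apply, smul_eq_mul, hBA, mul_zero] at h
  exact (mul_eq_zero.mp h).resolve_left hBH.ne'

end Orthogonal

section Primitive

variable {N : Type*} [AddCommGroup N]

def IsPrimitive (F : N) : Prop :=
  ∀ (F' : N) (k : ℤ), F = k • F' → k = 1 ∨ k = -1

theorem exists_eq_zsmul_isPrimitive (f : N →+ ℤ) {x : N} (hx : 0 < f x) :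
    ∃ (F : N) (a : ℤ), IsPrimitive F ∧ 0 < a ∧ x = a • F := by
  have hbdd : ∃ m : ℤ, ∀ a : ℤ, (0 < a ∧ ∃ F, x = a • F) → a ≤ m := by
    refine ⟨f x, fun a ⟨ha, F, hF⟩ => ?_⟩
    have hfx : f x = a * f F := by rw [hF, map_zsmul, smul_eq_mul]
    have hfF : 0 < f F := pos_of_mul_pos_right (hfx ▸ hx) ha.le
    nlinarith
  obtain ⟨a, ⟨ha, F, hxF⟩, hmax⟩ :=
    Int.exists_greatest_of_bdd hbdd ⟨1, one_pos, x, (one_zsmul x).symm⟩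
  refine ⟨F, a, fun F' k hk => ?_, ha, hxF⟩
  have hk0 : k ≠ 0 := by
    rintro rfl
    rw [hxF, hk, zero_zsmul, zsmul_zero, map_zero] at hx
    exact hx.false
  -- `x = (a k) • F' = (a (-k)) • (-F')`, so maximality of `a` bounds `|k|` by `1`.
  have hx₁ : x = (a * k) • F' := by rw [hxF, hk, mul_zsmul]
  have hx₂ : x = (a * -k) • -F' := by rw [hx₁, zsmul_neg, ← neg_zsmul, mul_neg, neg_neg]
  rcases lt_or_gt_of_ne hk0 with hk | hk
  · have := hmax _ ⟨by nlinarith, -F', hx₂⟩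
    right; nlinarith
  · have := hmax _ ⟨by nlinarith, F', hx₁⟩
    left; nlinarith

theorem IsPrimitive.dvd_of_zsmul_eq [IsAddTorsionFree N] {F y : N} (hF : IsPrimitive F)
    {m k : ℤ} (h : m • y = k • F) : m ∣ k := by
  have hbezout : (Int.gcd m k : ℤ) • F = m • (Int.gcdA m k • F + Int.gcdB m k • y) := by
    rw [Int.gcd_eq_gcd_ab, add_zsmul, zsmul_add, mul_zsmul, mul_zsmul, smul_comm k, ← h,
      smul_comm _ m]
  have hdk := Int.gcd_dvd_right m k
  obtain ⟨m', hm'⟩ := Int.gcd_dvd_left m k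
  rcases eq_or_ne (Int.gcd m k : ℤ) 0 with hd | hd
  · simp [Int.gcd_eq_zero_iff.mp (by exact_mod_cast hd)]
  generalize (Int.gcd m k : ℤ) = d at hbezout hdk hm' hd
  have hFm' : F = m' • (Int.gcdA m k • F + Int.gcdB m k • y) :=
    zsmul_right_injective hd (show d • F = d • _ by rw [hbezout, hm', mul_zsmul])
  rcases hF _ _ hFm' with rfl | rfl <;> simpa [hm'] using hdk

theorem IsPrimitive.exists_eq_zsmul_of_zsmul_eq [IsAddTorsionFree N] {F y : N}
    (hF : IsPrimitive F) {m k : ℤ} (hm : m ≠ 0) (h : m • y = k • F) : ∃ c : ℤ, y = c • F := by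
  obtain ⟨c, rfl⟩ := hF.dvd_of_zsmul_eq h
  exact ⟨c, zsmul_right_injective hm (by simpa only [mul_zsmul] using h)⟩

end Primitive

theorem stmt_1_general (N : Type*) [AddCommGroup N] [Module ℤ N]
    [Module.Free ℤ N]
    (b : N →ₗ[ℤ] N →ₗ[ℤ] ℤ) (hsymm : ∀ x y : N, b x y = b y x)
    (H : N)
    (hneg : ∀ x : N, b x H = 0 → x ≠ 0 → b x x < 0)
    (A B : N) (hA : 0 ≤ b A A) (hB : 0 ≤ b B B)
    (hAH : 0 < b A H) (hBH : 0 < b B H) (hAB : b A B = 0) :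
    b A A = 0 ∧ b B B = 0 ∧
      ∃ (F : N) (a c : ℤ),
        (∀ (F' : N) (k : ℤ), F = k • F' → k = 1 ∨ k = -1) ∧
        b F F = 0 ∧ 0 < b F H ∧ 0 < a ∧ 0 < c ∧
        A = a • F ∧ B = c • F := by
  have hBA : b B A = 0 := hsymm A B ▸ hAB
  have hAA := apply_self_eq_zero_of_orthogonal hneg hA hB hBH hAB hBA
  have hBB := apply_self_eq_zero_of_orthogonal hneg hB hA hAH hBA hAB
  -- The `•` of the statement is `zsmul`, while the lemma uses the `Module ℤ N` structure.
  have hprop : b B H • A = b A H • B :=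
    (Int.cast_smul_eq_zsmul ℤ (b B H) A).symm.trans
      ((smul_eq_smul_of_orthogonal hneg hA hB hAB hBA).trans (Int.cast_smul_eq_zsmul ℤ _ _))
  refine ⟨hAA, hBB, ?_⟩
  obtain ⟨F, a, hF, ha, rfl⟩ := exists_eq_zsmul_isPrimitive (b.flip H).toAddMonoidHom hAH
  have : IsAddTorsionFree N := .of_isTorsionFree ℤ N
  obtain ⟨c, rfl⟩ := hF.exists_eq_zsmul_of_zsmul_eq hAH.ne' (by rw [← hprop, smul_smul])
  simp only [map_zsmul, LinearMap.smul_apply, smul_eq_mul] at hAH hBH hAA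
  have hFH : 0 < b F H := pos_of_mul_pos_right hAH ha.le
  refine ⟨F, a, c, hF, ?_, hFH, ha, pos_of_mul_pos_left hBH hFH.le, rfl, rfl⟩
  simpa [ha.ne'] using hAA

/-- Lemma 2.1 (lattice-theoretic form): if A·B = 0 for classes of nonnegative
square on the positive side, then both are multiples of a common primitive
isotropic class. -/
theorem stmt_1 (N : Type*) [AddCommGroup N] [Module ℤ N]
    [Module.Free ℤ N] [Module.Finite ℤ N]
    (b : N →ₗ[ℤ] N →ₗ[ℤ] ℤ) (hsymm : ∀ x y : N, b x y = b y x)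
    (H : N) (hH : 0 < b H H)
    (hneg : ∀ x : N, b x H = 0 → x ≠ 0 → b x x < 0)
    (A B : N) (hA : 0 ≤ b A A) (hB : 0 ≤ b B B)
    (hAH : 0 < b A H) (hBH : 0 < b B H) (hAB : b A B = 0) :
    b A A = 0 ∧ b B B = 0 ∧
      ∃ (F : N) (a c : ℤ),
        (∀ (F' : N) (k : ℤ), F = k • F' → k = 1 ∨ k = -1) ∧
        b F F = 0 ∧ 0 < b F H ∧ 0 < a ∧ 0 < c ∧
        A = a • F ∧ B = c • F :=
  stmt_1_general N b hsymm H hneg A B hA hB hAH hBH hAB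
end

section
/- Let N be a hyperbolic lattice with ample class H (H·H > 0), and let A, B ∈ N with A·A ≥ 0, B·B ≥ 0, A·H > 0, B·H > 0. Set α = A·H and β = B·H. If A·B = 0 then βA = αB in N. -/
/-- Key Hodge-index computation: A·B = 0 forces (B·H)A = (A·H)B. -/
theorem stmt_2 (N : Type*) [AddCommGroup N] [Module ℤ N]
    [Module.Free ℤ N] [Module.Finite ℤ N]
    (b : N →ₗ[ℤ] N →ₗ[ℤ] ℤ) (hsymm : ∀ x y : N, b x y = b y x)
    (H : N) (hH : 0 < b H H)
    (hneg : ∀ x : N, b x H = 0 → x ≠ 0 → b x x < 0)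
    (A B : N) (hA : 0 ≤ b A A) (hB : 0 ≤ b B B)
    (hAH : 0 < b A H) (hBH : 0 < b B H) (hAB : b A B = 0) :
    (b B H) • A = (b A H) • B := by
  set C : N := (b B H) • A - (b A H) • B with hC
  have hCH : b C H = 0 := by
    simp [hC, map_sub, map_smul, smul_eq_mul]; ring
  have hBA : b B A = 0 := by rw [hsymm]; exact hAB
  have hCC : 0 ≤ b C C := by
    have : b C C = (b B H) * (b B H) * (b A A) + (b A H) * (b A H) * (b B B) := by
      simp [hC, map_sub, map_smul, smul_eq_mul, hAB, hBA]; ring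
    rw [this]
    positivity
  by_contra h
  have hCne : C ≠ 0 := by
    intro h0
    exact h (by rwa [hC, sub_eq_zero] at h0)
  exact absurd (hneg C hCH hCne) (not_lt.mpr hCC)
end
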